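/- Let M be a matroid with injective weights and unique optimal basis OPT. For e ∈ OPT, the gap Δ_e = OPT(M) − OPT(M|(S\{e})) equals max{w ∈ ℝ : (S \ {e})^{> μ(e) − w} does not block e}. -/

import Mathlib

open Matroid Set

variable {α : Type*}

/-- The `ℕ∞`-valued rank of a set `X` in a matroid `M`:
the supremum of the sizes of independent subsets of `X`. -/
noncomputable def Matroid.eRank' (M : Matroid α) (X : Set α) : ℕ∞ :=
  ⨆ I ∈ {I | M.Indep I ∧ I ⊆ X}, I.encard

/-- A set `A` *blocks* an element `e` if adding `e` to `A` does not increase the rank. -/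
def Matroid.Blocks (M : Matroid α) (A : Set α) (e : α) : Prop :=
  M.eRank' (insert e A) = M.eRank' A

/-- The total weight of a set of elements. -/
noncomputable def wt (μ : α → ℝ) (I : Set α) : ℝ := ∑ᶠ e ∈ I, μ e

/-- `I` is a maximum-weight base of `M` with respect to the weight function `μ`. -/
def IsMaxWeightBase (M : Matroid α) (μ : α → ℝ) (I : Set α) : Prop :=
  M.IsBase I ∧ ∀ J, M.IsBase J → wt μ J ≤ wt μ I

/-- The modified cost function `μ_{I,ε}` adding `ε` to the weight of each element of `I`. -/
noncomputable def modCost (μ : α → ℝ) (I : Set α) (ε : ℝ) : α → ℝ :=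
  fun e => μ e + I.indicator (fun _ => ε) e

/-- `I` is an `ε`-optimal base of `M` w.r.t. `μ`:
it is a maximum-weight base for the modified cost `μ_{I,ε}`. -/
def EpsOptimal (M : Matroid α) (μ : α → ℝ) (ε : ℝ) (I : Set α) : Prop :=
  IsMaxWeightBase M (modCost μ I ε) I

/-- Contraction of a matroid, defined by duality: `M ／ C = (M✶ ↾ (M.E \ C))✶`. -/
noncomputable def Matroid.contract' (M : Matroid α) (C : Set α) : Matroid α :=
  (M✶ ↾ (M.E \ C))✶

/-- The weight of a maximum-weight base of `M` with respect to `μ`. -/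
noncomputable def OPTval (M : Matroid α) (μ : α → ℝ) : ℝ :=
  sSup ((fun B => wt μ B) '' {B | M.IsBase B})

/-!
Since `e` is not a coloop, there is a heaviest base `B'` avoiding `e`, and the gap is
`Δ = μ(OPT) - μ(B')`.
If the elements of `S ∖ {e}` heavier than `μ e - Δ` spanned `e`, one of them, `f`, would lie
outside `cl(OPT - e)`, and `OPT - e + f` would be a base avoiding `e` heavier than `B'`.
Conversely, for `w > Δ` the elements of `B'` heavier than `μ e - w` already span `e`: otherwise
`e` could be exchanged into `B'` for some other `g ∈ B'` with `μ g ≤ μ e - w`, and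
`B' - g + e` would be heavier than `OPT`.
-/

lemma wt_insert_sdiff_singleton (μ : α → ℝ) {B : Set α} {e f : α} (hB : B.Finite) (he : e ∈ B)
    (hf : f ∉ B) : wt μ (insert f (B \ {e})) = wt μ B - μ e + μ f := by
  have hsplit : wt μ (insert e (B \ {e})) = μ e + wt μ (B \ {e}) :=
    finsum_mem_insert μ (fun h => h.2 rfl) hB.sdiff
  have hinsert : wt μ (insert f (B \ {e})) = μ f + wt μ (B \ {e}) :=
    finsum_mem_insert μ (fun h => hf h.1) hB.sdiff
  rw [insert_sdiff_singleton, insert_eq_of_mem he] at hsplit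
  linarith

namespace Matroid

variable {M : Matroid α} {μ : α → ℝ} {A B B' H OPT : Set α} {e : α}

lemma eRank'_eq_eRk (M : Matroid α) (X : Set α) : M.eRank' X = M.eRk X := by
  refine le_antisymm (iSup₂_le fun I ⟨hI, hIX⟩ => ?_) ?_
  · exact hI.eRk_eq_encard ▸ M.eRk_mono hIX
  · obtain ⟨I, hI⟩ := M.exists_isBasis' X
    rw [hI.eRk_eq_encard]
    exact le_iSup₂ (f := fun (J : Set α) (_ : J ∈ {J | M.Indep J ∧ J ⊆ X}) => J.encard) I
      ⟨hI.indep, hI.subset⟩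

lemma blocks_iff_mem_closure [M.RankFinite] (he : e ∈ M.E) : M.Blocks A e ↔ e ∈ M.closure A := by
  rw [Blocks, eRank'_eq_eRk, eRank'_eq_eRk]
  refine ⟨fun h => by_contra fun hA => ?_, fun h => ?_⟩
  · rw [eRk_insert_eq_add_one ⟨he, hA⟩] at h
    exact ((ENat.lt_add_one_iff (M.isRkFinite_set A).eRk_lt_top.ne).2 le_rfl).ne' h
  · rw [← eRk_insert_closure_eq, insert_eq_of_mem h, eRk_closure_eq]

lemma exists_isMaxWeightBase (M : Matroid α) [M.Finite] (μ : α → ℝ) :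
    ∃ B, IsMaxWeightBase M μ B := by
  have hfin : Set.Finite {B | M.IsBase B} :=
    M.ground_finite.finite_subsets.subset fun _ hB => hB.subset_ground
  obtain ⟨B, hB, hmax⟩ := Set.exists_max_image _ (wt μ) hfin M.exists_isBase
  exact ⟨B, hB, hmax⟩

lemma IsMaxWeightBase.OPTval_eq (h : IsMaxWeightBase M μ B) : OPTval M μ = wt μ B :=
  IsGreatest.csSup_eq ⟨⟨B, h.1, rfl⟩, by rintro _ ⟨J, hJ, rfl⟩; exact h.2 J hJ⟩

lemma IsBase.exists_exchange_of_mem_closure (hB : M.IsBase B) (heB : e ∈ B) (hAE : A ⊆ M.E)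
    (heA : e ∉ A) (h : e ∈ M.closure A) : ∃ f ∈ A, f ∉ B ∧ M.IsBase (insert f (B \ {e})) := by
  have hA : ¬ A ⊆ M.closure (B \ {e}) := fun hA =>
    hB.indep.notMem_closure_sdiff_of_mem heB (M.closure_subset_closure_of_subset_closure hA h)
  obtain ⟨f, hfA, hf⟩ := not_subset.1 hA
  have hfB : f ∉ B := fun hfB =>
    hf (M.mem_closure_of_mem' ⟨hfB, fun h => heA (h ▸ hfA)⟩ (hB.subset_ground hfB))
  exact ⟨f, hfA, hfB, hB.exchange_base_of_notMem_closure heB hf (hAE hfA)⟩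

lemma IsBase.exists_exchange_of_notMem_closure (hB : M.IsBase B) (heE : e ∈ M.E) (heB : e ∉ B)
    (hHB : H ⊆ B) (h : e ∉ M.closure H) : ∃ g ∈ B \ H, M.IsBase (insert e (B \ {g})) := by
  have hind : M.Indep (insert e H) :=
    (hB.indep.subset hHB).insert_indep_iff_of_notMem (fun he => heB (hHB he)) |>.2 ⟨heE, h⟩
  obtain ⟨B'', hB'', hsub, hsup⟩ := hind.exists_isBase_subset_union_isBase hB
  have hBB'' : ¬ B ⊆ B'' := fun hBB'' =>
    heB ((hB.eq_of_subset_isBase hB'' hBB'') ▸ hsub (mem_insert e H))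
  obtain ⟨g, hgB, hgB''⟩ := not_subset.1 hBB''
  obtain ⟨f, ⟨hfB'', hfB⟩, hbase⟩ := hB.exchange hB'' ⟨hgB, hgB''⟩
  have hfe : f = e := by
    rcases hsup hfB'' with (rfl | hfH) | hfB'
    · rfl
    · exact absurd (hHB hfH) hfB
    · exact absurd hfB' hfB
  exact ⟨g, ⟨hgB, fun hgH => hgB'' (hsub (mem_insert_of_mem e hgH))⟩, hfe ▸ hbase⟩

lemma IsBase.notMem_closure_above_gap [M.RankFinite] (hB : M.IsBase B) (heB : e ∈ B)
    (hB' : ∀ J, M.IsBase J → e ∉ J → wt μ J ≤ wt μ B') :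
    e ∉ M.closure {x ∈ M.E \ {e} | μ e - (wt μ B - wt μ B') < μ x} := by
  intro h
  obtain ⟨f, ⟨⟨-, hfe⟩, hf⟩, hfB, hbase⟩ :=
    hB.exists_exchange_of_mem_closure heB (fun x hx => hx.1.1) (fun he => he.1.2 rfl) h
  have hle := hB' _ hbase fun heJ => heJ.elim (fun hef => hfe hef.symm) fun hee => hee.2 rfl
  rw [wt_insert_sdiff_singleton μ hB.finite heB hfB] at hle
  linarith

lemma IsBase.mem_closure_above_of_gap_lt [M.RankFinite] {w : ℝ} (hB' : M.IsBase B')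
    (hOPT : IsMaxWeightBase M μ OPT) (heE : e ∈ M.E) (heB' : e ∉ B')
    (hw : wt μ OPT - wt μ B' < w) : e ∈ M.closure {x ∈ M.E \ {e} | μ e - w < μ x} := by
  have hH : {x ∈ B' | μ e - w < μ x} ⊆ {x ∈ M.E \ {e} | μ e - w < μ x} :=
    fun x ⟨hx, hxw⟩ => ⟨⟨hB'.subset_ground hx, fun hxe => heB' (hxe ▸ hx)⟩, hxw⟩
  refine M.closure_subset_closure hH (by_contra fun h => ?_)
  obtain ⟨g, ⟨hgB', hgH⟩, hbase⟩ :=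
    hB'.exists_exchange_of_notMem_closure heE heB' (sep_subset _ _) h
  have hle := hOPT.2 _ hbase
  rw [wt_insert_sdiff_singleton μ hB'.finite hgB' heB'] at hle
  exact hgH ⟨hgB', by linarith⟩

end Matroid

theorem gap_eq_max_opt_general (M : Matroid α) [M.Finite] (μ : α → ℝ)
    (OPT : Set α) (hOPT : IsMaxWeightBase M μ OPT)
    (e : α) (he : e ∈ OPT) (hniso : ¬ ∀ B, M.IsBase B → e ∈ B) :
    IsGreatest {w : ℝ | ¬ M.Blocks {x ∈ M.E \ {e} | μ e - w < μ x} e}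
      (OPTval M μ - OPTval (M ↾ (M.E \ {e})) μ) := by
  have heE : e ∈ M.E := hOPT.1.subset_ground he
  have hcoindep : M.Coindep {e} := by
    push Not at hniso
    obtain ⟨B, hB, heB⟩ := hniso
    exact coindep_iff_subset_compl_isBase.2 ⟨B, hB, singleton_subset_iff.2 ⟨heE, heB⟩⟩
  obtain ⟨B', hB'⟩ := (M ＼ {e}).exists_isMaxWeightBase μ
  have hdel : ∀ J, (M ＼ {e}).IsBase J ↔ M.IsBase J ∧ e ∉ J := fun J => by
    rw [hcoindep.delete_isBase_iff, disjoint_singleton_right]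
  obtain ⟨hB'base, heB'⟩ := (hdel B').1 hB'.1
  rw [← delete_eq_restrict, hOPT.OPTval_eq, hB'.OPTval_eq]
  refine ⟨(blocks_iff_mem_closure heE).not.2 <|
    hOPT.1.notMem_closure_above_gap he fun J hJ heJ => hB'.2 J ((hdel J).2 ⟨hJ, heJ⟩), ?_⟩
  intro w hw
  by_contra! hlt
  exact hw <| (blocks_iff_mem_closure heE).2 <|
    hB'base.mem_closure_above_of_gap_lt hOPT heE heB' hlt

/-- For a non-isolated element `e` of the unique optimal base, the gap
`Δ_e = OPT(M) − OPT(M|(S∖{e}))` equals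
`max { w : (S ∖ {e})^{> μ e − w} does not block e }`. -/
theorem gap_eq_max_opt (M : Matroid α) [M.Finite] (μ : α → ℝ)
    (hinj : Set.InjOn μ M.E) (hpos : ∀ e ∈ M.E, 0 < μ e)
    (OPT : Set α) (hOPT : IsMaxWeightBase M μ OPT)
    (hOPTuniq : ∀ B, IsMaxWeightBase M μ B → B = OPT)
    (e : α) (he : e ∈ OPT) (hniso : ¬ ∀ B, M.IsBase B → e ∈ B) :
    IsGreatest {w : ℝ | ¬ M.Blocks {x ∈ M.E \ {e} | μ e - w < μ x} e}
      (OPTval M μ - OPTval (M ↾ (M.E \ {e})) μ) :=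
  gap_eq_max_opt_general M μ OPT hOPT e he hniso
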